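/- Let X be a W-hyperbolic space, (T_n : X → X) nonexpansive with common fixed point p, (γ_n) with γ_n = (n+2)/(n+1) satisfying d(T_n y, T_m y) ≤ (|γ_n - γ_m|/γ_n)·d(y, T_n y) for all y, n, m, α_n = 1 - 2/(n+2), x_0 = x, x_{n+1} = (1-α_n)u + α_n T_n(x_n), and M ≥ max{d(x,p), d(u,p)}. Then for all n: d(x_{n+1}, x_n) ≤ 6M/(n+2). -/

import Mathlib

/-!
All iterates stay in the ball of radius `M` about the common fixed point `p`, so every distance
between `u`, `xₙ` and `Tₖ xₘ` is at most `2M`. Comparing `x_{n+2} = W(u, T_{n+1} x_{n+1}, α_{n+1})`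
with `x_{n+1} = W(u, Tₙ xₙ, αₙ)` through (W2) and (W4) gives
`d(x_{n+2}, x_{n+1}) ≤ |α_{n+1} - αₙ| 2M + αₙ (d(x_{n+1}, xₙ) + |γ_{n+1} - γₙ|/γ_{n+1} 2M)`,
and the bound `6M/(n+2)` propagates through this recursion by an explicit rational inequality.
-/

open Set

section WHyperbolic

variable {X : Type*} [MetricSpace X] {W : X → X → ℝ → X}

lemma dist_W_le_of_le
    (W1 : ∀ (x y z : X), ∀ l ∈ Icc (0:ℝ) 1, dist z (W x y l) ≤ (1 - l) * dist z x + l * dist z y)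
    {a b z : X} {l M : ℝ} (hl : l ∈ Icc (0:ℝ) 1) (ha : dist z a ≤ M) (hb : dist z b ≤ M) :
    dist z (W a b l) ≤ M :=
  calc dist z (W a b l) ≤ (1 - l) * dist z a + l * dist z b := W1 a b z l hl
    _ ≤ (1 - l) * M + l * M := by gcongr <;> linarith [hl.2, hl.1]
    _ = M := by ring

lemma dist_W_W_le
    (W2 : ∀ (x y : X), ∀ l ∈ Icc (0:ℝ) 1, ∀ m ∈ Icc (0:ℝ) 1,
      dist (W x y l) (W x y m) = |l - m| * dist x y)
    (W4 : ∀ (x y z w : X), ∀ l ∈ Icc (0:ℝ) 1,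
      dist (W x z l) (W y w l) ≤ (1 - l) * dist x y + l * dist z w)
    (u a b : X) {l m : ℝ} (hl : l ∈ Icc (0:ℝ) 1) (hm : m ∈ Icc (0:ℝ) 1) :
    dist (W u a l) (W u b m) ≤ |l - m| * dist u a + m * dist a b :=
  calc dist (W u a l) (W u b m) ≤ dist (W u a l) (W u a m) + dist (W u a m) (W u b m) :=
        dist_triangle _ _ _
    _ ≤ |l - m| * dist u a + ((1 - m) * dist u u + m * dist a b) :=
        add_le_add (W2 u a l hl m hm).le (W4 u u a b m hm)
    _ = |l - m| * dist u a + m * dist a b := by simp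

end WHyperbolic

section Nonexpansive

variable {X : Type*} [MetricSpace X] {f g : X → X}

lemma dist_apply_apply_le (hf : ∀ x y, dist (f x) (f y) ≤ dist x y) (x y : X) :
    dist (f x) (g y) ≤ dist x y + dist (f y) (g y) :=
  (dist_triangle _ _ _).trans (add_le_add_left (hf x y) _)

lemma dist_apply_le_two_mul (hf : ∀ x y, dist (f x) (f y) ≤ dist x y) {p a b : X} {M : ℝ}
    (hp : f p = p) (ha : dist a p ≤ M) (hb : dist b p ≤ M) : dist a (f b) ≤ 2 * M :=
  calc dist a (f b) ≤ dist a p + dist (f b) (f p) := by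
        rw [hp, dist_comm (f b)]; exact dist_triangle _ _ _
    _ ≤ M + M := add_le_add ha ((hf b p).trans hb)
    _ = 2 * M := by ring

end Nonexpansive

lemma one_sub_two_div_mem_Icc (n : ℕ) : 1 - 2 / ((n : ℝ) + 2) ∈ Icc (0:ℝ) 1 := by
  have h : 2 / ((n : ℝ) + 2) ≤ 1 := by rw [div_le_one (by positivity)]; linarith [n.cast_nonneg (α := ℝ)]
  exact ⟨by linarith, by linarith [show 0 ≤ 2 / ((n : ℝ) + 2) by positivity]⟩

lemma abs_one_sub_two_div_sub (n : ℕ) :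
    |(1 - 2 / ((n : ℝ) + 3)) - (1 - 2 / ((n : ℝ) + 2))| = 2 / (((n : ℝ) + 2) * ((n : ℝ) + 3)) := by
  rw [abs_of_nonneg]
  · field_simp; ring
  · rw [sub_nonneg, sub_le_sub_iff_left]
    gcongr; linarith

lemma abs_div_sub_div_div (n : ℕ) :
    |((n : ℝ) + 3) / ((n : ℝ) + 2) - ((n : ℝ) + 2) / ((n : ℝ) + 1)| / (((n : ℝ) + 3) / ((n : ℝ) + 2))
      = 1 / (((n : ℝ) + 1) * ((n : ℝ) + 3)) := by
  rw [abs_of_nonpos]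
  · field_simp; ring
  · rw [sub_nonpos, div_le_div_iff₀ (by positivity) (by positivity)]; nlinarith

lemma six_mul_div_bound_step (n : ℕ) {M d : ℝ} (hM : 0 ≤ M) (hd : d ≤ 6 * M / ((n : ℝ) + 2)) :
    2 / (((n : ℝ) + 2) * ((n : ℝ) + 3)) * (2 * M)
      + (1 - 2 / ((n : ℝ) + 2)) * (d + 1 / (((n : ℝ) + 1) * ((n : ℝ) + 3)) * (2 * M))
      ≤ 6 * M / ((n : ℝ) + 3) := by
  have hα := (one_sub_two_div_mem_Icc n).1
  have gap : 6 * M / ((n : ℝ) + 3)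
      - (2 / (((n : ℝ) + 2) * ((n : ℝ) + 3)) * (2 * M) + (1 - 2 / ((n : ℝ) + 2))
        * (6 * M / ((n : ℝ) + 2) + 1 / (((n : ℝ) + 1) * ((n : ℝ) + 3)) * (2 * M)))
      = M * (14 * (n : ℝ) + 16) / (((n : ℝ) + 1) * ((n : ℝ) + 2) ^ 2 * ((n : ℝ) + 3)) := by
    field_simp; ring
  have : 0 ≤ M * (14 * (n : ℝ) + 16) / (((n : ℝ) + 1) * ((n : ℝ) + 2) ^ 2 * ((n : ℝ) + 3)) := by
    positivity
  nlinarith [mul_le_mul_of_nonneg_left hd hα]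

lemma dist_halpern_iterate_le {X : Type*} [MetricSpace X] {W : X → X → ℝ → X}
    (W1 : ∀ (x y z : X), ∀ l ∈ Icc (0:ℝ) 1, dist z (W x y l) ≤ (1 - l) * dist z x + l * dist z y)
    {T : ℕ → X → X} (hT : ∀ n, ∀ (x y : X), dist (T n x) (T n y) ≤ dist x y)
    {p u : X} (hfix : ∀ n, T n p = p) {α : ℕ → ℝ} (hα : ∀ n, α n ∈ Icc (0:ℝ) 1)
    {x : ℕ → X} (hxrec : ∀ n, x (n + 1) = W u (T n (x n)) (α n))
    {M : ℝ} (hM1 : dist (x 0) p ≤ M) (hM2 : dist u p ≤ M) (n : ℕ) : dist (x n) p ≤ M := by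
  induction n with
  | zero => exact hM1
  | succ n ih =>
    rw [hxrec, dist_comm]
    refine dist_W_le_of_le W1 (hα n) (by rwa [dist_comm]) ?_
    rw [← hfix n, dist_comm]
    exact (hT n _ _).trans ih

theorem stmt16_general {X : Type*} [MetricSpace X] (W : X → X → ℝ → X)
    (W1 : ∀ (x y z : X), ∀ l ∈ Set.Icc (0:ℝ) 1,
      dist z (W x y l) ≤ (1 - l) * dist z x + l * dist z y)
    (W2 : ∀ (x y : X), ∀ l ∈ Set.Icc (0:ℝ) 1, ∀ m ∈ Set.Icc (0:ℝ) 1,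
      dist (W x y l) (W x y m) = |l - m| * dist x y)
    (W4 : ∀ (x y z w : X), ∀ l ∈ Set.Icc (0:ℝ) 1,
      dist (W x z l) (W y w l) ≤ (1 - l) * dist x y + l * dist z w)
    (T : ℕ → X → X)
    (hT : ∀ n, ∀ (x y : X), dist (T n x) (T n y) ≤ dist x y)
    (p : X) (hfix : ∀ n, T n p = p)
    (u x₀ : X) (α : ℕ → ℝ)
    (x : ℕ → X) (hx0 : x 0 = x₀)
    (hxrec : ∀ n, x (n + 1) = W u (T n (x n)) (α n))
    (hα : ∀ n, α n = 1 - 2 / (n + 2))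
    (γ : ℕ → ℝ) (hγ : ∀ n, γ n = (n + 2) / (n + 1))
    (hC1 : ∀ (y : X) (n m : ℕ), dist (T n y) (T m y) ≤ (|γ n - γ m| / γ n) * dist y (T n y))
    (M : ℝ) (hM1 : dist x₀ p ≤ M) (hM2 : dist u p ≤ M) :
    ∀ n, dist (x (n + 1)) (x n) ≤ 6 * M / (n + 2) := by
  obtain rfl : α = fun n : ℕ ↦ 1 - 2 / ((n : ℝ) + 2) := funext hα
  obtain rfl : γ = fun n : ℕ ↦ ((n : ℝ) + 2) / (n + 1) := funext hγ
  beta_reduce at hxrec hC1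
  have hbnd := dist_halpern_iterate_le W1 hT hfix one_sub_two_div_mem_Icc hxrec (hx0 ▸ hM1) hM2
  have hM : 0 ≤ M := dist_nonneg.trans hM2
  intro n
  induction n with
  | zero =>
    calc dist (x 1) (x 0) ≤ dist (x 1) p + dist (x 0) p := dist_triangle_right _ _ _
      _ ≤ 6 * M / ((0 : ℕ) + 2) := by norm_num; linarith [hbnd 1, hbnd 0]
  | succ n ih =>
    have hstep := dist_W_W_le W2 W4 u (T (n + 1) (x (n + 1))) (T n (x n))
      (one_sub_two_div_mem_Icc (n + 1)) (one_sub_two_div_mem_Icc n)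
    rw [← hxrec (n + 1), ← hxrec n] at hstep
    have hC := hC1 (x n) (n + 1) n
    have hTu := dist_apply_le_two_mul (hT (n + 1)) (hfix _) hM2 (hbnd (n + 1))
    have hTx := dist_apply_le_two_mul (hT (n + 1)) (hfix _) (hbnd n) (hbnd n)
    push_cast at hstep hC ih ⊢
    rw [show (n : ℝ) + 1 + 2 = n + 3 by ring] at hstep ⊢
    rw [abs_one_sub_two_div_sub] at hstep
    rw [show (n : ℝ) + 1 + 2 = n + 3 by ring, show (n : ℝ) + 1 + 1 = n + 2 by ring,
      abs_div_sub_div_div] at hC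
    calc _ ≤ _ := hstep
      _ ≤ 2 / (((n : ℝ) + 2) * ((n : ℝ) + 3)) * (2 * M) + (1 - 2 / ((n : ℝ) + 2))
          * (dist (x (n + 1)) (x n) + 1 / (((n : ℝ) + 1) * ((n : ℝ) + 3)) * (2 * M)) := by
          have hα := (one_sub_two_div_mem_Icc n).1
          gcongr
          refine (dist_apply_apply_le (hT _) _ _).trans (add_le_add le_rfl (hC.trans ?_))
          gcongr
      _ ≤ 6 * M / ((n : ℝ) + 3) := six_mul_div_bound_step n hM ih

theorem stmt16 {X : Type*} [MetricSpace X] (W : X → X → ℝ → X)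
    (W1 : ∀ (x y z : X), ∀ l ∈ Set.Icc (0:ℝ) 1,
      dist z (W x y l) ≤ (1 - l) * dist z x + l * dist z y)
    (W2 : ∀ (x y : X), ∀ l ∈ Set.Icc (0:ℝ) 1, ∀ m ∈ Set.Icc (0:ℝ) 1,
      dist (W x y l) (W x y m) = |l - m| * dist x y)
    (W3 : ∀ (x y : X), ∀ l ∈ Set.Icc (0:ℝ) 1, W x y l = W y x (1 - l))
    (W4 : ∀ (x y z w : X), ∀ l ∈ Set.Icc (0:ℝ) 1,
      dist (W x z l) (W y w l) ≤ (1 - l) * dist x y + l * dist z w)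
    (T : ℕ → X → X)
    (hT : ∀ n, ∀ (x y : X), dist (T n x) (T n y) ≤ dist x y)
    (p : X) (hfix : ∀ n, T n p = p)
    (u x₀ : X) (α : ℕ → ℝ)
    (x : ℕ → X) (hx0 : x 0 = x₀)
    (hxrec : ∀ n, x (n + 1) = W u (T n (x n)) (α n))
    (hα : ∀ n, α n = 1 - 2 / (n + 2))
    (γ : ℕ → ℝ) (hγ : ∀ n, γ n = (n + 2) / (n + 1))
    (hC1 : ∀ (y : X) (n m : ℕ), dist (T n y) (T m y) ≤ (|γ n - γ m| / γ n) * dist y (T n y))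
    (M : ℝ) (hM : 0 < M) (hM1 : dist x₀ p ≤ M) (hM2 : dist u p ≤ M) :
    ∀ n, dist (x (n + 1)) (x n) ≤ 6 * M / (n + 2) :=
  stmt16_general W W1 W2 W4 T hT p hfix u x₀ α x hx0 hxrec hα γ hγ hC1 M hM1 hM2
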